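/- arXiv:2502.08370 — 3 statements merged into one kernel-verified Lean document; each statement's English description precedes it below -/
import Mathlib

section
/- Let M ≥ 2 be an integer, let z1, …, zM be real numbers with zj < 0 for all j, and let s ≥ 1 be a real number. Then the convergence factor of the Parareal/FIE-DR method with M splitting terms satisfies K_{FIE-DR}(z1, …, zM, s) = |(R_DR(z1/s, …, zM/s))^s − ∏_{j=1}^M 1/(1 − zj)| / (1 − |∏_{j=1}^M 1/(1 − zj)|) < 1, where R_DR(z1, …, zM) = 1 + (∏_{j=1}^M 1/(1 − zj)) · ∑_{j=1}^M zj. -/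
/-!
Write `T = -∑ zⱼ > 0`. The Weierstrass product inequality `∏ (1 - zⱼ) ≥ 1 + T` gives
`0 < R_FIE ≤ 1 / (1 + T)`, and `0 < R_DR < 1`. Bernoulli's inequality for the exponent `s ≥ 1`,
together with `R_FIE(z / s) ≤ 1`, gives `R_DR(z / s) ^ s ≥ 1 - T`. Hence `K < 1`, i.e.
`2 R_FIE - 1 < R_DR(z / s) ^ s < 1`: the upper bound is clear, and for the lower one either
`T ≥ 1`, when `2 R_FIE - 1 ≤ 0`, or `T < 1`, when `2 / (1 + T) - 1 < 1 - T`.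
-/

open Finset

theorem one_add_sum_le_prod_one_add {ι R : Type*} [CommSemiring R] [PartialOrder R]
    [IsOrderedRing R] (s : Finset ι) {f : ι → R} (hf : ∀ j ∈ s, 0 ≤ f j) :
    1 + ∑ j ∈ s, f j ≤ ∏ j ∈ s, (1 + f j) := by
  induction s using Finset.cons_induction with
  | empty => simp
  | cons a s _ ih =>
    have hfa : 0 ≤ f a := hf a (mem_cons_self a s)
    have hfs : ∀ j ∈ s, 0 ≤ f j := fun j hj => hf j (mem_cons_of_mem hj)
    rw [prod_cons, sum_cons]
    calc 1 + (f a + ∑ j ∈ s, f j)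
        ≤ 1 + (f a + ∑ j ∈ s, f j) + f a * ∑ j ∈ s, f j :=
          le_add_of_nonneg_right (mul_nonneg hfa (sum_nonneg hfs))
      _ = (1 + f a) * (1 + ∑ j ∈ s, f j) := by ring
      _ ≤ (1 + f a) * ∏ j ∈ s, (1 + f j) :=
          mul_le_mul_of_nonneg_left (ih hfs) (add_nonneg zero_le_one hfa)

theorem abs_sub_div_one_sub_abs_lt_one {x g t : ℝ} (hx₀ : 0 < x) (hx₁ : x < 1)
    (hxt : 1 - t ≤ x) (hg : 0 < g) (hgt : g * (1 + t) ≤ 1) :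
    |x - g| / (1 - |g|) < 1 := by
  have hg₁ : g < 1 := by nlinarith
  rw [abs_of_pos hg, div_lt_one (by linarith), abs_lt]
  constructor
  · nlinarith
  · linarith

section Stability

variable {ι : Type*} [Fintype ι]

noncomputable def stabilityFIE (z : ι → ℝ) : ℝ := ∏ j, 1 / (1 - z j)

noncomputable def stabilityDR (z : ι → ℝ) : ℝ := 1 + stabilityFIE z * ∑ j, z j

variable {z : ι → ℝ}

theorem stabilityFIE_eq_inv_prod : stabilityFIE z = (∏ j, (1 - z j))⁻¹ := by
  simp [stabilityFIE]

theorem one_sub_sum_le_prod_one_sub (hz : ∀ j, z j ≤ 0) : 1 - ∑ j, z j ≤ ∏ j, (1 - z j) := by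
  simpa [sub_eq_add_neg] using
    one_add_sum_le_prod_one_add univ (f := fun j => -z j) fun j _ => neg_nonneg.2 (hz j)

theorem one_le_prod_one_sub (hz : ∀ j, z j ≤ 0) : 1 ≤ ∏ j, (1 - z j) := by
  linarith [one_sub_sum_le_prod_one_sub hz, sum_nonpos fun j (_ : j ∈ univ) => hz j]

theorem stabilityFIE_pos (hz : ∀ j, z j ≤ 0) : 0 < stabilityFIE z := by
  rw [stabilityFIE_eq_inv_prod]
  exact inv_pos.2 (zero_lt_one.trans_le (one_le_prod_one_sub hz))

theorem stabilityFIE_le_one (hz : ∀ j, z j ≤ 0) : stabilityFIE z ≤ 1 := by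
  rw [stabilityFIE_eq_inv_prod]
  exact inv_le_one_of_one_le₀ (one_le_prod_one_sub hz)

theorem stabilityFIE_mul_one_sub_sum_le_one (hz : ∀ j, z j ≤ 0) :
    stabilityFIE z * (1 - ∑ j, z j) ≤ 1 := by
  have hP := one_le_prod_one_sub hz
  rw [stabilityFIE_eq_inv_prod, inv_mul_le_iff₀ (by linarith), mul_one]
  exact one_sub_sum_le_prod_one_sub hz

theorem stabilityDR_pos (hz : ∀ j, z j ≤ 0) : 0 < stabilityDR z := by
  have hP := one_le_prod_one_sub hz
  have hnum : 0 < ∏ j, (1 - z j) + ∑ j, z j := by linarith [one_sub_sum_le_prod_one_sub hz]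
  have hDR_eq : stabilityDR z = (∏ j, (1 - z j) + ∑ j, z j) / ∏ j, (1 - z j) := by
    rw [stabilityDR, stabilityFIE_eq_inv_prod]
    field_simp
  rw [hDR_eq]
  positivity

theorem stabilityDR_lt_one [Nonempty ι] (hz : ∀ j, z j < 0) : stabilityDR z < 1 := by
  have hsum : ∑ j, z j < 0 := sum_neg (fun j _ => hz j) univ_nonempty
  have := stabilityFIE_pos fun j => (hz j).le
  rw [stabilityDR]
  nlinarith

theorem one_add_sum_le_stabilityDR_div_rpow (hz : ∀ j, z j ≤ 0) {s : ℝ} (hs : 1 ≤ s) :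
    1 + ∑ j, z j ≤ stabilityDR (fun j => z j / s) ^ s := by
  have hzs : ∀ j, z j / s ≤ 0 := fun j => div_nonpos_of_nonpos_of_nonneg (hz j) (by linarith)
  have hsum : ∑ j, z j = s * ∑ j, z j / s := by
    rw [mul_sum]; exact sum_congr rfl fun j _ => by field_simp
  have hQ := stabilityFIE_le_one hzs
  have hsum_nonpos : ∑ j, z j ≤ 0 := sum_nonpos fun j _ => hz j
  have hDR := stabilityDR_pos hzs
  rw [stabilityDR] at hDR ⊢
  calc 1 + ∑ j, z j ≤ 1 + stabilityFIE (fun j => z j / s) * ∑ j, z j := by nlinarith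
    _ = 1 + s * (stabilityFIE (fun j => z j / s) * ∑ j, z j / s) := by rw [hsum]; ring
    _ ≤ _ := one_add_mul_self_le_rpow_one_add (by linarith) hs

end Stability

open Finset in
theorem parareal_FIE_DR_conv_factor_M_terms_general
    (M : ℕ) (z : Fin M → ℝ) (hz : ∀ j, z j < 0)
    (s : ℝ) (hs : 1 ≤ s) :
    |(1 + (∏ j, 1 / (1 - z j / s)) * ∑ j, z j / s) ^ s - ∏ j, 1 / (1 - z j)| /
      (1 - |∏ j, 1 / (1 - z j)|) < 1 := by
  -- With no splitting terms `K` is `0 / 0`, which is `0` in Lean.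
  rcases isEmpty_or_nonempty (Fin M) with hM | hM
  · simp
  have hs₀ : 0 < s := by linarith
  have hz_nonpos : ∀ j, z j ≤ 0 := fun j => (hz j).le
  have hzs_neg : ∀ j, z j / s < 0 := fun j => div_neg_of_neg_of_pos (hz j) hs₀
  have hDR_pos := stabilityDR_pos fun j => (hzs_neg j).le
  change |stabilityDR (fun j => z j / s) ^ s - stabilityFIE z| / (1 - |stabilityFIE z|) < 1
  refine abs_sub_div_one_sub_abs_lt_one (t := -∑ j, z j) (Real.rpow_pos_of_pos hDR_pos s)
    (Real.rpow_lt_one hDR_pos.le (stabilityDR_lt_one hzs_neg) hs₀) ?_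
    (stabilityFIE_pos hz_nonpos) ?_
  · simpa [sub_eq_add_neg] using one_add_sum_le_stabilityDR_div_rpow hz_nonpos hs
  · simpa [sub_eq_add_neg] using stabilityFIE_mul_one_sub_sum_le_one hz_nonpos

open Finset in
/-- Convergence factor bound for the Parareal/FIE-DR method with `M` splitting terms. -/
theorem parareal_FIE_DR_conv_factor_M_terms
    (M : ℕ) (hM : 2 ≤ M) (z : Fin M → ℝ) (hz : ∀ j, z j < 0)
    (s : ℝ) (hs : 1 ≤ s) :
    |(1 + (∏ j, 1 / (1 - z j / s)) * ∑ j, z j / s) ^ s - ∏ j, 1 / (1 - z j)| /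
      (1 - |∏ j, 1 / (1 - z j)|) < 1 :=
  parareal_FIE_DR_conv_factor_M_terms_general M z hz s hs
end

section
/- Let z1, z2 be real numbers with z1 < 0 and z2 < 0, and let s1, s2 be real numbers with s2 > s1 ≥ 1. Then ((1 − z1/s1)(1 − z2/s1))^{−s1} > ((1 − z1/s2)(1 − z2/s2))^{−s2}. In particular, for every real s ≥ 1, ((1 − z1/s)(1 − z2/s))^{−s} ≤ 1/((1 − z1)(1 − z2)). -/
/-!
Since `((1 - z₁/s)(1 - z₂/s))^(-s) = exp (-(s log (1 - z₁/s) + s log (1 - z₂/s)))`, it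
suffices that `s ↦ s log (1 - z/s)` is strictly increasing for `z < 0`. With `t = -z/s` this is
`-z · log (1 + t) / t`, a secant slope of the strictly concave `log` at `1`, which increases as
`t` decreases. The bound is the case `s₁ = 1`.
-/

open Real Set

lemma one_lt_one_sub_div {z s : ℝ} (hz : z < 0) (hs : 0 < s) : 1 < 1 - z / s := by
  linarith [div_neg_of_neg_of_pos hz hs]

lemma mul_log_one_sub_div_strictMonoOn {z : ℝ} (hz : z < 0) :
    StrictMonoOn (fun s : ℝ => s * log (1 - z / s)) (Ioi 0) := by
  intro s (hs : 0 < s) t (ht : 0 < t) hst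
  have hs1 := one_lt_one_sub_div hz hs
  have ht1 := one_lt_one_sub_div hz ht
  have hts : 1 - z / t < 1 - z / s := by
    linarith [neg_div t z, neg_div s z, div_lt_div_of_pos_left (neg_pos.2 hz) hs hst]
  have hslope := strictConcaveOn_log_Ioi.secant_strict_mono (a := 1) (mem_Ioi.2 one_pos)
    (mem_Ioi.2 (one_pos.trans ht1)) (mem_Ioi.2 (one_pos.trans hs1)) ht1.ne' hs1.ne' hts
  simp only [log_one, sub_zero, sub_sub_cancel_left] at hslope
  have hscale (r : ℝ) (hr : 0 < r) : r * log (1 - z / r) = -z * (log (1 - z / r) / -(z / r)) := by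
    field_simp [hz.ne, hr.ne']
  simpa only [hscale s hs, hscale t ht] using mul_lt_mul_of_pos_left hslope (neg_pos.2 hz)

lemma rpow_neg_mul_one_sub_div_strictAntiOn {z₁ z₂ : ℝ} (h₁ : z₁ < 0) (h₂ : z₂ < 0) :
    StrictAntiOn (fun s : ℝ => ((1 - z₁ / s) * (1 - z₂ / s)) ^ (-s)) (Ioi 0) := by
  have hexp : EqOn (fun s : ℝ => ((1 - z₁ / s) * (1 - z₂ / s)) ^ (-s))
      (fun s => exp (-(s * log (1 - z₁ / s) + s * log (1 - z₂ / s)))) (Ioi 0) := by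
    intro s (hs : 0 < s)
    have hpos₁ := one_pos.trans (one_lt_one_sub_div h₁ hs)
    have hpos₂ := one_pos.trans (one_lt_one_sub_div h₂ hs)
    simp only
    rw [rpow_def_of_pos (mul_pos hpos₁ hpos₂), log_mul hpos₁.ne' hpos₂.ne']
    ring_nf
  refine StrictAntiOn.congr (fun s hs t ht hst => ?_) hexp.symm
  exact exp_lt_exp.2 <| neg_lt_neg <| add_lt_add
    (mul_log_one_sub_div_strictMonoOn h₁ hs ht hst)
    (mul_log_one_sub_div_strictMonoOn h₂ hs ht hst)

/-- Strict monotone decrease of `s ↦ ((1 - z1/s)(1 - z2/s))^(-s)` and the consequent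
bound by the FIE stability function. -/
theorem FIE_power_strict_decrease_and_bound
    (z1 z2 : ℝ) (h1 : z1 < 0) (h2 : z2 < 0) :
    (∀ s1 s2 : ℝ, 1 ≤ s1 → s1 < s2 →
      ((1 - z1 / s2) * (1 - z2 / s2)) ^ (-s2) <
        ((1 - z1 / s1) * (1 - z2 / s1)) ^ (-s1)) ∧
    (∀ s : ℝ, 1 ≤ s →
      ((1 - z1 / s) * (1 - z2 / s)) ^ (-s) ≤ 1 / ((1 - z1) * (1 - z2))) := by
  have hanti := rpow_neg_mul_one_sub_div_strictAntiOn h1 h2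
  refine ⟨fun s1 s2 hs1 hs12 => ?_, fun s hs => ?_⟩
  · have hs1pos : (0 : ℝ) < s1 := one_pos.trans_le hs1
    exact hanti hs1pos (hs1pos.trans hs12) hs12
  · simpa [rpow_neg_one] using
      hanti.antitoneOn (mem_Ioi.2 one_pos) (mem_Ioi.2 (one_pos.trans_le hs)) hs
end

section
/- For all real numbers z1 < 0 and z2 < 0, the inequality e^{z1 + z2} ≥ −1/3 + 4/(3(1 − z1)(1 − z2)) holds. -/
/-!
With `s = z1 + z2`, the hypotheses give `(1 - z1) * (1 - z2) ≥ 1 - s > 0`, so the right-hand side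
is at most `-1/3 + 4 / (3 * (1 - s)) = (3 + s) / (3 * (1 - s))`, and it remains to show
`3 + s ≤ 3 * (1 - s) * exp s` for `s ≤ 0`. With `t = -s` this is `(3 - t) * exp t ≤ 3 * (1 + t)`
for `t ≥ 0`: both sides agree at `t = 0`, and the difference `3 * (1 + t) - (3 - t) * exp t` has
derivative `3 - (2 - t) * exp t ≥ 3 - e > 0`.
-/

open Real

lemma two_sub_mul_exp_le_exp_one (t : ℝ) : (2 - t) * exp t ≤ exp 1 := by
  calc (2 - t) * exp t ≤ exp (1 - t) * exp t := by
        gcongr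
        linarith [add_one_le_exp (1 - t)]
    _ = exp 1 := by rw [← exp_add, sub_add_cancel]

lemma monotone_three_mul_one_add_sub_three_sub_mul_exp :
    Monotone fun t : ℝ => 3 * (1 + t) - (3 - t) * exp t := by
  refine monotone_of_hasDerivAt_nonneg (f' := fun t => 3 - (2 - t) * exp t) (fun t => ?_) fun t => ?_
  · exact ((((hasDerivAt_id' t).const_add 1).const_mul 3).fun_sub
      (((hasDerivAt_id' t).const_sub 3).fun_mul (hasDerivAt_exp t))).congr_deriv (by ring)
  · show 0 ≤ 3 - (2 - t) * exp t
    linarith [two_sub_mul_exp_le_exp_one t, exp_one_lt_d9]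

lemma three_sub_mul_exp_le {t : ℝ} (ht : 0 ≤ t) : (3 - t) * exp t ≤ 3 * (1 + t) := by
  have := monotone_three_mul_one_add_sub_three_sub_mul_exp ht
  simp only [exp_zero] at this
  linarith

lemma three_add_le_mul_exp {s : ℝ} (hs : s ≤ 0) : 3 + s ≤ 3 * (1 - s) * exp s := by
  have h := mul_le_mul_of_nonneg_right (three_sub_mul_exp_le (neg_nonneg.mpr hs)) (exp_pos s).le
  rw [mul_assoc, ← exp_add, neg_add_cancel, exp_zero, mul_one, sub_neg_eq_add,
    ← sub_eq_add_neg] at h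
  linarith

/-- Limiting-case inequality for the Parareal/FIE-FIE convergence proof. -/
theorem exp_ge_FIE_limit (z1 z2 : ℝ) (h1 : z1 < 0) (h2 : z2 < 0) :
    Real.exp (z1 + z2) ≥ -1 / 3 + 4 / (3 * ((1 - z1) * (1 - z2))) := by
  have hs : 0 < 1 - (z1 + z2) := by linarith
  have hprod : 1 - (z1 + z2) ≤ (1 - z1) * (1 - z2) := by
    nlinarith [mul_pos_of_neg_of_neg h1 h2]
  calc -1 / 3 + 4 / (3 * ((1 - z1) * (1 - z2))) ≤ -1 / 3 + 4 / (3 * (1 - (z1 + z2))) := by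
        gcongr
    _ = (3 + (z1 + z2)) / (3 * (1 - (z1 + z2))) := by field_simp; ring
    _ ≤ exp (z1 + z2) := by
        rw [div_le_iff₀ (by positivity)]
        linarith [three_add_le_mul_exp (s := z1 + z2) (by linarith)]
end
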